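/- arXiv:0812.4667 — 2 statements merged into one kernel-verified Lean document; each statement's English description precedes it below -/
import Mathlib

section
/- Let c : Fin n → Fin n → Fin n → ℝ be the structure constants of an n-dimensional real Lie algebra, let f : Fin n → ℝ → ℝ be such that each f i is continuous on (0,1] and f i ε ≠ 0 for every ε ∈ (0,1], and let c₀ : Fin n → Fin n → Fin n → ℝ be such that for all i, j, k the function ε ↦ c i j k * (f i ε) * (f j ε) / (f k ε) tends to c₀ i j k as ε → 0⁺. If moreover c₀ i j k ≠ 0 whenever c i j k ≠ 0, then there exists y : Fin n → ℝ with y i ≠ 0 for all i such that c₀ i j k = c i j k * y i * y j / y k for all i, j, k; in particular the contracted Lie algebra is isomorphic to the original one (the contraction is improper). -/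
open Filter Topology

/-!
Where `c i j k ≠ 0`, `log |f_i f_j / f_k|` is the image of `(log |f_i|)_i` under
the linear map `u ↦ (u_i + u_j - u_k)`. Its range is finite-dimensional, hence closed, so it
contains the limit `(log |c₀ / c|)`, say as the image of `w`; then `|y_i| = exp w_i`. The signs
of the `y_i` are those of the `f_i` at one small `ε`, where every `f_i f_j / f_k` already has the
sign of its limit `c₀ / c`.
-/

variable {α ι : Type*} {l : Filter α}

theorem LinearMap.mem_range_of_tendsto {𝕜 E F : Type*} [NontriviallyNormedField 𝕜]
    [CompleteSpace 𝕜] [AddCommGroup E] [Module 𝕜 E] [FiniteDimensional 𝕜 E]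
    [AddCommGroup F] [TopologicalSpace F] [IsTopologicalAddGroup F] [Module 𝕜 F]
    [ContinuousSMul 𝕜 F] [T2Space F] [l.NeBot] (A : E →ₗ[𝕜] F) {u : α → E} {v : F}
    (h : Tendsto (fun a => A (u a)) l (𝓝 v)) : v ∈ LinearMap.range A :=
  (LinearMap.range A).closed_of_finiteDimensional.mem_of_tendsto h
    (Eventually.of_forall fun a => LinearMap.mem_range_self A (u a))

theorem exists_add_sub_eq_of_tendsto [Finite ι] [l.NeBot] (S : Set (ι × ι × ι))
    {u : α → ι → ℝ} {v : ι × ι × ι → ℝ}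
    (h : ∀ p ∈ S, Tendsto (fun a => u a p.1 + u a p.2.1 - u a p.2.2) l (𝓝 (v p))) :
    ∃ w : ι → ℝ, ∀ p ∈ S, w p.1 + w p.2.1 - w p.2.2 = v p := by
  let π (i : ι) : (ι → ℝ) →ₗ[ℝ] ℝ := LinearMap.proj i
  let A : (ι → ℝ) →ₗ[ℝ] (S → ℝ) := LinearMap.pi fun p => π p.1.1 + π p.1.2.1 - π p.1.2.2
  obtain ⟨w, hw⟩ := A.mem_range_of_tendsto (u := u) (v := fun p => v p)
    (tendsto_pi_nhds.2 fun p => h p p.2)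
  exact ⟨w, fun p hp => congrFun hw ⟨p, hp⟩⟩

theorem exists_pos_mul_div_eq_of_tendsto [Finite ι] [l.NeBot] (S : Set (ι × ι × ι))
    {g : ι → α → ℝ} {r : ι × ι × ι → ℝ} (hg : ∀ i, ∀ᶠ a in l, 0 < g i a)
    (hr : ∀ p ∈ S, 0 < r p)
    (h : ∀ p ∈ S, Tendsto (fun a => g p.1 a * g p.2.1 a / g p.2.2 a) l (𝓝 (r p))) :
    ∃ x : ι → ℝ, (∀ i, 0 < x i) ∧ ∀ p ∈ S, x p.1 * x p.2.1 / x p.2.2 = r p := by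
  have hlog : ∀ p ∈ S, Tendsto
      (fun a => Real.log (g p.1 a) + Real.log (g p.2.1 a) - Real.log (g p.2.2 a)) l
      (𝓝 (Real.log (r p))) := by
    intro p hp
    refine ((Real.continuousAt_log (hr p hp).ne').tendsto.comp (h p hp)).congr' ?_
    filter_upwards [eventually_all.2 hg] with a ha
    simp [Real.log_div, Real.log_mul, (ha _).ne']
  obtain ⟨w, hw⟩ := exists_add_sub_eq_of_tendsto S (u := fun a i => Real.log (g i a)) hlog
  refine ⟨fun i => Real.exp (w i), fun i => Real.exp_pos _, fun p hp => ?_⟩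
  rw [← Real.exp_add, ← Real.exp_sub, hw p hp, Real.exp_log (hr p hp)]

theorem div_abs_mul_abs_of_mul_pos {K : Type*} [Field K] [LinearOrder K] [IsStrictOrderedRing K]
    {a b : K} (h : 0 < a * b) : a / |a| * |b| = b := by
  rcases mul_pos_iff.1 h with ⟨ha, hb⟩ | ⟨ha, hb⟩
  · simp [abs_of_pos ha, abs_of_pos hb, ha.ne']
  · simp [abs_of_neg ha, abs_of_neg hb, ha.ne]

theorem exists_ne_zero_mul_div_eq_of_tendsto [Finite ι] [l.NeBot] (S : Set (ι × ι × ι))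
    {g : ι → α → ℝ} {r : ι × ι × ι → ℝ} (hg : ∀ i, ∀ᶠ a in l, g i a ≠ 0)
    (hr : ∀ p ∈ S, r p ≠ 0)
    (h : ∀ p ∈ S, Tendsto (fun a => g p.1 a * g p.2.1 a / g p.2.2 a) l (𝓝 (r p))) :
    ∃ y : ι → ℝ, (∀ i, y i ≠ 0) ∧ ∀ p ∈ S, y p.1 * y p.2.1 / y p.2.2 = r p := by
  obtain ⟨x, hx, hxr⟩ := exists_pos_mul_div_eq_of_tendsto S (g := fun i a => |g i a|)
    (r := fun p => |r p|) (fun i => (hg i).mono fun a => abs_pos.2)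
    (fun p hp => abs_pos.2 (hr p hp))
    (fun p hp => by simpa only [abs_mul, abs_div] using (h p hp).abs)
  have hsign : ∀ p ∈ S, ∀ᶠ a in l, 0 < g p.1 a * g p.2.1 a / g p.2.2 a * r p := fun p hp =>
    ((h p hp).mul_const (r p)).eventually (lt_mem_nhds (mul_self_pos.2 (hr p hp)))
  obtain ⟨a₀, hga₀, hsa₀⟩ :=
    ((eventually_all.2 hg).and ((eventually_all_finite S.toFinite).2 hsign)).exists
  refine ⟨fun i => g i a₀ / |g i a₀| * x i,
    fun i => mul_ne_zero (div_ne_zero (hga₀ i) (abs_ne_zero.2 (hga₀ i))) (hx i).ne', ?_⟩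
  intro p hp
  calc _ = g p.1 a₀ * g p.2.1 a₀ / g p.2.2 a₀ / |g p.1 a₀ * g p.2.1 a₀ / g p.2.2 a₀| * |r p| := by
        rw [← hxr p hp, abs_div, abs_mul]
        have := hga₀ p.1
        have := hga₀ p.2.1
        have := hga₀ p.2.2
        have := (hx p.2.2).ne'
        field_simp
    _ = r p := div_abs_mul_abs_of_mul_pos (hsa₀ p hp)

theorem diagonal_contraction_improper_general
    (n : ℕ) (c c₀ : Fin n → Fin n → Fin n → ℝ)
    (f : Fin n → ℝ → ℝ)
    (hfne : ∀ i, ∀ ε ∈ Set.Ioc (0 : ℝ) 1, f i ε ≠ 0)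
    (hlim : ∀ i j k, Tendsto (fun ε : ℝ => c i j k * f i ε * f j ε / f k ε)
      (𝓝[>] (0 : ℝ)) (𝓝 (c₀ i j k)))
    (hne : ∀ i j k, c i j k ≠ 0 → c₀ i j k ≠ 0) :
    ∃ y : Fin n → ℝ, (∀ i, y i ≠ 0) ∧
      ∀ i j k, c₀ i j k = c i j k * y i * y j / y k := by
  have hf : ∀ i, ∀ᶠ ε in 𝓝[>] (0 : ℝ), f i ε ≠ 0 := fun i =>
    eventually_of_mem (Ioc_mem_nhdsGT zero_lt_one) (hfne i)
  have hratio : ∀ p ∈ {p : Fin n × Fin n × Fin n | c p.1 p.2.1 p.2.2 ≠ 0},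
      Tendsto (fun ε => f p.1 ε * f p.2.1 ε / f p.2.2 ε) (𝓝[>] 0)
        (𝓝 (c₀ p.1 p.2.1 p.2.2 / c p.1 p.2.1 p.2.2)) := by
    rintro ⟨i, j, k⟩ (hc : c i j k ≠ 0)
    refine ((hlim i j k).div_const (c i j k)).congr fun ε => ?_
    rw [mul_assoc, mul_div_assoc, mul_div_cancel_left₀ _ hc]
  obtain ⟨y, hy, hyc⟩ := exists_ne_zero_mul_div_eq_of_tendsto _ hf
    (fun p hp => div_ne_zero (hne _ _ _ hp) hp) hratio
  refine ⟨y, hy, fun i j k => ?_⟩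
  by_cases hc : c i j k = 0
  · have hlim₀ := hlim i j k
    simp only [hc, zero_mul, zero_div] at hlim₀ ⊢
    exact tendsto_nhds_unique hlim₀ tendsto_const_nhds
  · rw [mul_assoc, mul_div_assoc, hyc (i, j, k) hc, mul_div_cancel₀ _ hc]

/-- If a diagonal contraction kills no structure constant (`c₀ i j k ≠ 0` whenever
`c i j k ≠ 0`), then the contracted structure constants are obtained from the
original ones by a constant diagonal change of basis `y` with nonzero entries,
so the contraction is improper (the contracted algebra is isomorphic to the
original one). -/
theorem diagonal_contraction_improper
    (n : ℕ) (c c₀ : Fin n → Fin n → Fin n → ℝ)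
    (hanti : ∀ i j k, c i j k = -(c j i k))
    (hjac : ∀ i j k m, ∑ l, (c i j l * c l k m + c k i l * c l j m + c j k l * c l i m) = 0)
    (f : Fin n → ℝ → ℝ)
    (hfcont : ∀ i, ContinuousOn (f i) (Set.Ioc 0 1))
    (hfne : ∀ i, ∀ ε ∈ Set.Ioc (0 : ℝ) 1, f i ε ≠ 0)
    (hlim : ∀ i j k, Tendsto (fun ε : ℝ => c i j k * f i ε * f j ε / f k ε)
      (𝓝[>] (0 : ℝ)) (𝓝 (c₀ i j k)))
    (hne : ∀ i j k, c i j k ≠ 0 → c₀ i j k ≠ 0) :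
    ∃ y : Fin n → ℝ, (∀ i, y i ≠ 0) ∧
      ∀ i j k, c₀ i j k = c i j k * y i * y j / y k :=
  diagonal_contraction_improper_general n c c₀ f hfne hlim hne
end

section
/- Let c : Fin n → Fin n → Fin n → ℂ be the structure constants of an n-dimensional complex Lie algebra, let f : Fin n → ℝ → ℂ be such that each f i is continuous on (0,1] and f i ε ≠ 0 for every ε ∈ (0,1], and let c₀ : Fin n → Fin n → Fin n → ℂ be such that for all i, j, k the function ε ↦ c i j k * (f i ε) * (f j ε) / (f k ε) tends to c₀ i j k as ε → 0⁺. Then there exist γ : Fin n → ℂ with γ i ≠ 0 for all i, and β : Fin n → ℤ, such that for all i, j, k the function ε ↦ c i j k * (γ i * γ j / γ k) * (ε : ℂ) ^ (β i + β j - β k) (integer power, ε > 0 real) tends to c₀ i j k as ε → 0⁺. -/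
open Filter Topology
open scoped Matrix

/-!
Put `u ε := (-log ‖f l ε‖)_l`. For a triple with `c i j k ≠ 0`, the form `u i + u j - u k` is
`-log ‖f i f j / f k‖`, which converges when `c₀ i j k ≠ 0` and tends to `+∞` when `c₀ i j k = 0`.
Subtracting from `u ε` a rational linear correction that kills the forms of the first kind gives,
for small `ε`, a point where those forms vanish and the others are positive; by density it can be
taken rational, then integral, and it is `β`. The map `h ↦ lim ∏ l, f l ε ^ h l` is a
homomorphism to `ℂˣ` on the subgroup of `ℤⁿ` where this limit exists and is nonzero; as `ℂˣ` is
divisible it extends to `ℤⁿ`, and `γ` is its value on the unit vectors.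
-/

theorem LinearMap.exists_comp_comp_eq_self {K V W : Type*} [Field K] [AddCommGroup V] [Module K V]
    [AddCommGroup W] [Module K W] (f : V →ₗ[K] W) : ∃ g : W →ₗ[K] V, f ∘ₗ g ∘ₗ f = f := by
  obtain ⟨s, hs⟩ := f.rangeRestrict.exists_rightInverse_of_surjective f.range_rangeRestrict
  obtain ⟨g, hg⟩ := s.exists_extend
  refine ⟨g, LinearMap.ext fun v => ?_⟩
  have hgf : g (f v) = s (f.rangeRestrict v) := congr($hg (f.rangeRestrict v))
  simpa [hgf] using congr(($hs (f.rangeRestrict v) : W))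

theorem Matrix.exists_mul_mul_eq_self {K m n : Type*} [Field K] [Fintype m] [Fintype n]
    (M : Matrix m n K) : ∃ S : Matrix n m K, M * S * M = M := by
  classical
  obtain ⟨g, hg⟩ := (toLin' M).exists_comp_comp_eq_self
  refine ⟨LinearMap.toMatrix' g, toLin'.injective ?_⟩
  rwa [toLin'_mul, toLin'_mul, toLin'_toMatrix', LinearMap.comp_assoc]

theorem exists_rat_mulVec_eq_zero_and_pos_of_tendsto {ι κ σ α : Type*} [Fintype ι] [Finite κ]
    [Fintype σ] {l : Filter α} [l.NeBot] (M : Matrix ι σ ℚ) (N : Matrix κ σ ℚ)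
    (u : α → σ → ℝ) (L : ι → ℝ) (hM : Tendsto (fun a => M.map (↑) *ᵥ u a) l (𝓝 L))
    (hN : ∀ k, Tendsto (fun a => (N.map (↑) *ᵥ u a) k) l atTop) :
    ∃ y : σ → ℚ, M *ᵥ y = 0 ∧ ∀ k, 0 < (N *ᵥ y) k := by
  classical
  obtain ⟨S, hS⟩ := M.exists_mul_mul_eq_self
  -- `P` maps into `ker M`, and `N * P` differs from `N` by `N * S * M`, which converges along `u`;
  -- so the open set where all forms of `N * P` are positive is nonempty and has a rational point.
  set P : Matrix σ σ ℚ := 1 - S * M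
  have hMP : M * P = 0 := by rw [Matrix.mul_sub, Matrix.mul_one, ← Matrix.mul_assoc, hS, sub_self]
  set g : (σ → ℝ) → κ → ℝ := fun x => (N * P).map (↑) *ᵥ x
  have hg : ∀ x, g x = N.map (↑) *ᵥ x - (N * S).map (↑) *ᵥ (M.map (↑) *ᵥ x) := by
    intro x
    simp only [g, P, Matrix.mul_sub, Matrix.mul_one, ← Matrix.mul_assoc, ← Rat.coe_castHom,
      Matrix.map_sub _ (map_sub (Rat.castHom ℝ)), Matrix.map_mul, Matrix.sub_mulVec,
      Matrix.mulVec_mulVec]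
  have hU : IsOpen {x | ∀ k, 0 < g x k} := by
    simp only [Set.ofPred_forall]
    exact isOpen_iInter_of_finite fun k =>
      isOpen_lt continuous_const
        ((continuous_apply k).comp (continuous_const.matrix_mulVec continuous_id))
  obtain ⟨x, hx⟩ : ∃ x, ∀ k, 0 < g x k := by
    have hSM : Tendsto (fun a => (N * S).map (↑) *ᵥ (M.map (↑) *ᵥ u a)) l
        (𝓝 ((N * S).map (↑) *ᵥ L)) :=
      ((continuous_const.matrix_mulVec continuous_id).tendsto L).comp hM
    have hgu : ∀ k, Tendsto (fun a => g (u a) k) l atTop := fun k => by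
      simpa only [hg, Pi.sub_apply, sub_eq_add_neg] using
        (hN k).atTop_add (tendsto_pi_nhds.mp hSM k).neg
    obtain ⟨a, ha⟩ := (eventually_all.mpr fun k => (hgu k).eventually_gt_atTop 0).exists
    exact ⟨u a, ha⟩
  obtain ⟨q, hq⟩ : ∃ q : σ → ℚ, ∀ k, 0 < g (fun i => q i) k := by
    obtain ⟨_, hq, q, rfl⟩ := (DenseRange.piMap fun _ => Rat.denseRange_cast).inter_open_nonempty
      _ hU ⟨x, hx⟩
    exact ⟨q, hq⟩
  refine ⟨P *ᵥ q, by rw [Matrix.mulVec_mulVec, hMP, Matrix.zero_mulVec], fun k => ?_⟩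
  have hcast := RingHom.map_mulVec (Rat.castHom ℝ) (N * P) q k
  rw [Matrix.mulVec_mulVec, ← Rat.cast_pos (K := ℝ), ← Rat.coe_castHom, hcast]
  exact hq k

theorem Rat.exists_pos_nat_mul_eq_intCast {σ : Type*} [Fintype σ] (y : σ → ℚ) :
    ∃ d : ℕ, 0 < d ∧ ∃ β : σ → ℤ, ∀ i, (β i : ℚ) = d * y i := by
  classical
  refine ⟨∏ i, (y i).den, Finset.prod_pos fun i _ => (y i).pos,
    fun i => (∏ j ∈ Finset.univ.erase i, ((y j).den : ℤ)) * (y i).num, fun i => ?_⟩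
  rw [← Finset.prod_erase_mul _ _ (Finset.mem_univ i)]
  push_cast
  rw [mul_assoc, Rat.den_mul_eq_num]

theorem single_add_single_sub_single_dotProduct {σ R : Type*} [Fintype σ] [DecidableEq σ]
    [Ring R] (i j k : σ) (x : σ → R) :
    (Pi.single i 1 + Pi.single j 1 - Pi.single k 1 : σ → R) ⬝ᵥ x = x i + x j - x k := by
  simp [add_dotProduct, sub_dotProduct]

theorem exists_int_signature_of_tendsto_add_sub {σ α : Type*} [Fintype σ]
    {l : Filter α} [l.NeBot] (P Q : σ → σ → σ → Prop) (u : α → σ → ℝ) (L : σ → σ → σ → ℝ)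
    (hP : ∀ i j k, P i j k → Tendsto (fun a => u a i + u a j - u a k) l (𝓝 (L i j k)))
    (hQ : ∀ i j k, Q i j k → Tendsto (fun a => u a i + u a j - u a k) l atTop) :
    ∃ β : σ → ℤ, (∀ i j k, P i j k → β i + β j - β k = 0) ∧
      ∀ i j k, Q i j k → 0 < β i + β j - β k := by
  classical
  set form : σ × σ × σ → σ → ℚ := fun t => Pi.single t.1 1 + Pi.single t.2.1 1 - Pi.single t.2.2 1
  have hform_cast :
      ∀ t (x : σ → ℝ), (fun l => (form t l : ℝ)) ⬝ᵥ x = x t.1 + x t.2.1 - x t.2.2 := by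
    intro t x
    have : (fun l => (form t l : ℝ)) = Pi.single t.1 1 + Pi.single t.2.1 1 - Pi.single t.2.2 1 := by
      ext l; simp [form, Pi.single_apply, apply_ite (Rat.cast : ℚ → ℝ)]
    rw [this, single_add_single_sub_single_dotProduct]
  obtain ⟨y, hyP, hyQ⟩ := exists_rat_mulVec_eq_zero_and_pos_of_tendsto
    (fun t : {t : σ × σ × σ // P t.1 t.2.1 t.2.2} => form t)
    (fun t : {t : σ × σ × σ // Q t.1 t.2.1 t.2.2} => form t) u (fun t => L t.1.1 t.1.2.1 t.1.2.2)
    (tendsto_pi_nhds.mpr fun t => (hP _ _ _ t.2).congr fun a => (hform_cast t.1 (u a)).symm)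
    (fun t => (hQ _ _ _ t.2).congr fun a => (hform_cast t.1 (u a)).symm)
  obtain ⟨d, hd, β, hβ⟩ := Rat.exists_pos_nat_mul_eq_intCast y
  have hβy : ∀ i j k, ((β i + β j - β k : ℤ) : ℚ) = d * (form (i, j, k) ⬝ᵥ y) := by
    intro i j k
    rw [single_add_single_sub_single_dotProduct]
    push_cast
    rw [hβ, hβ, hβ]
    ring
  refine ⟨β, fun i j k h => ?_, fun i j k h => ?_⟩
  · have hy : form (i, j, k) ⬝ᵥ y = 0 := congrFun hyP ⟨(i, j, k), h⟩
    have : ((β i + β j - β k : ℤ) : ℚ) = 0 := by rw [hβy, hy, mul_zero]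
    exact_mod_cast this
  · have hy : 0 < form (i, j, k) ⬝ᵥ y := hyQ ⟨(i, j, k), h⟩
    have : (0 : ℚ) < ((β i + β j - β k : ℤ) : ℚ) := by
      rw [hβy]; exact mul_pos (by exact_mod_cast hd) hy
    exact_mod_cast this

theorem neg_log_norm_mul_div {K : Type*} [NormedField K] {x y z : K} (hx : x ≠ 0) (hy : y ≠ 0)
    (hz : z ≠ 0) :
    -Real.log ‖x * y / z‖ = -Real.log ‖x‖ + -Real.log ‖y‖ - -Real.log ‖z‖ := by
  rw [norm_div, norm_mul, Real.log_div (by positivity) (by positivity),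
    Real.log_mul (by positivity) (by positivity)]
  ring

theorem Filter.Tendsto.neg_log_norm_atTop {α E : Type*} [NormedAddGroup E] {l : Filter α}
    {g : α → E} (hg : Tendsto g l (𝓝 0)) (hg0 : ∀ᶠ a in l, g a ≠ 0) :
    Tendsto (fun a => -Real.log ‖g a‖) l atTop :=
  tendsto_neg_atBot_atTop.comp <| Real.tendsto_log_nhdsGT_zero.comp <|
    tendsto_norm_nhdsNE_zero.comp <| tendsto_nhdsWithin_iff.mpr ⟨hg, hg0⟩

theorem exists_int_signature_of_tendsto_mul_div {σ α K : Type*} [Fintype σ]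
    [NormedField K] {l : Filter α} [l.NeBot] (f : σ → α → K) (hf : ∀ᶠ a in l, ∀ i, f i a ≠ 0)
    (R : σ → σ → σ → Prop) (z : σ → σ → σ → K)
    (hz : ∀ i j k, R i j k → Tendsto (fun a => f i a * f j a / f k a) l (𝓝 (z i j k))) :
    ∃ β : σ → ℤ, (∀ i j k, R i j k → z i j k ≠ 0 → β i + β j - β k = 0) ∧
      ∀ i j k, R i j k → z i j k = 0 → 0 < β i + β j - β k := by
  have hlog : ∀ i j k, (fun a => -Real.log ‖f i a * f j a / f k a‖) =ᶠ[l]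
      fun a => -Real.log ‖f i a‖ + -Real.log ‖f j a‖ - -Real.log ‖f k a‖ :=
    fun i j k => hf.mono fun a ha => neg_log_norm_mul_div (ha i) (ha j) (ha k)
  obtain ⟨β, hβ_zero, hβ_pos⟩ := exists_int_signature_of_tendsto_add_sub
    (fun i j k => R i j k ∧ z i j k ≠ 0) (fun i j k => R i j k ∧ z i j k = 0)
    (fun a l => -Real.log ‖f l a‖) (fun i j k => -Real.log ‖z i j k‖)
    (fun i j k ⟨hR, hz0⟩ =>
      (((hz i j k hR).norm.log (norm_ne_zero_iff.mpr hz0)).neg).congr' (hlog i j k))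
    (fun i j k ⟨hR, hz0⟩ => ((hz0 ▸ hz i j k hR).neg_log_norm_atTop
      (hf.mono fun a ha => div_ne_zero (mul_ne_zero (ha i) (ha j)) (ha k))).congr' (hlog i j k))
  exact ⟨β, fun i j k hR hz0 => hβ_zero i j k ⟨hR, hz0⟩, fun i j k hR hz0 => hβ_pos i j k ⟨hR, hz0⟩⟩

theorem IsAlgClosed.pow_surjective_units {K : Type*} [Field K] [IsAlgClosed K] {n : ℕ}
    (hn : n ≠ 0) : Function.Surjective fun a : Kˣ => a ^ n := by
  intro a
  obtain ⟨z, hz⟩ := IsAlgClosed.exists_pow_nat_eq (a : K) (Nat.pos_of_ne_zero hn)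
  have hz0 : z ≠ 0 := by
    rintro rfl
    exact a.ne_zero (by rw [← hz, zero_pow hn])
  exact ⟨Units.mk0 z hz0, Units.ext (by simpa using hz)⟩

theorem IsAlgClosed.zpow_surjective_units {K : Type*} [Field K] [IsAlgClosed K] {n : ℤ}
    (hn : n ≠ 0) : Function.Surjective fun a : Kˣ => a ^ n := by
  obtain ⟨m, rfl | rfl⟩ := Int.eq_nat_or_neg n
  · simpa using pow_surjective_units (K := K) (n := m) (by simpa using hn)
  · intro a
    obtain ⟨b, hb⟩ := pow_surjective_units (K := K) (n := m) (by simpa using hn) a⁻¹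
    exact ⟨b, by simp [hb]⟩

noncomputable instance IsAlgClosed.divisibleByAdditiveUnits {K : Type*} [Field K] [IsAlgClosed K] :
    DivisibleBy (Additive Kˣ) ℤ :=
  divisibleByOfSMulRightSurj _ _ fun hn => IsAlgClosed.zpow_surjective_units hn

theorem prod_zpow_single_add_single_sub_single {σ K : Type*} [Fintype σ] [DecidableEq σ]
    [Field K] (g : σ → K) (hg : ∀ i, g i ≠ 0) (i j k : σ) :
    ∏ l, g l ^ (Pi.single i 1 + Pi.single j 1 - Pi.single k 1 : σ → ℤ) l = g i * g j / g k := by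
  have hsingle : ∀ i, ∏ l, g l ^ (Pi.single i 1 : σ → ℤ) l = g i := fun i => by
    rw [Fintype.prod_eq_single i fun l hl => by simp [hl]]
    simp
  simp only [Pi.add_apply, Pi.sub_apply, zpow_add₀ (hg _), zpow_sub₀ (hg _),
    Finset.prod_mul_distrib, Finset.prod_div_distrib, hsingle]

theorem exists_addMonoidHom_eq_lim {M α K : Type*} [AddCommGroup M] [Field K] [IsAlgClosed K]
    [TopologicalSpace K] [T2Space K] [ContinuousMul K] [ContinuousInv₀ K] {l : Filter α}
    [l.NeBot] (F : M → α → K) (hF0 : F 0 =ᶠ[l] 1) (hF : ∀ a b, F (a + b) =ᶠ[l] F a * F b) :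
    ∃ φ : M →+ Additive Kˣ, ∀ a z, z ≠ 0 → Tendsto (F a) l (𝓝 z) → ((φ a).toMul : K) = z := by
  let H : AddSubgroup M :=
    { carrier := {a | ∃ z ≠ 0, Tendsto (F a) l (𝓝 z)}
      zero_mem' := ⟨1, one_ne_zero, tendsto_const_nhds.congr' hF0.symm⟩
      add_mem' := fun ⟨z, hz, ha⟩ ⟨w, hw, hb⟩ =>
        ⟨z * w, mul_ne_zero hz hw, (ha.mul hb).congr' (hF _ _).symm⟩
      neg_mem' := fun {a} ⟨z, hz, ha⟩ => ⟨z⁻¹, inv_ne_zero hz, (ha.inv₀ hz).congr' <| by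
        filter_upwards [hF (-a) a, hF0] with x hx hx0
        rw [neg_add_cancel, hx0] at hx
        exact (eq_inv_of_mul_eq_one_left hx.symm).symm⟩ }
  choose lim hlim_ne hlim using fun a : H => a.2
  let ψ : H →+ Additive Kˣ := AddMonoidHom.mk' (fun a => .ofMul (Units.mk0 (lim a) (hlim_ne a)))
    fun a b => Units.ext <| tendsto_nhds_unique (hlim (a + b))
      (((hlim a).mul (hlim b)).congr' (hF a b).symm)
  obtain ⟨φ, hφ⟩ := (Module.Baer.of_divisible _).extension_property_addMonoidHom H.subtype
    Subtype.coe_injective ψ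
  refine ⟨φ, fun a z hz ha => ?_⟩
  rw [show φ a = ψ ⟨a, z, hz, ha⟩ from DFunLike.congr_fun hφ ⟨a, z, hz, ha⟩]
  exact tendsto_nhds_unique (hlim _) ha

theorem exists_units_mul_div_eq_lim {σ α K : Type*} [Fintype σ] [Field K]
    [IsAlgClosed K] [TopologicalSpace K] [T2Space K] [ContinuousMul K] [ContinuousInv₀ K]
    {l : Filter α} [l.NeBot] (f : σ → α → K) (hf : ∀ᶠ a in l, ∀ i, f i a ≠ 0) :
    ∃ γ : σ → Kˣ, ∀ i j k z, z ≠ 0 → Tendsto (fun a => f i a * f j a / f k a) l (𝓝 z) →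
      (γ i * γ j / γ k : K) = z := by
  classical
  obtain ⟨φ, hφ⟩ := exists_addMonoidHom_eq_lim (fun (h : σ → ℤ) a => ∏ i, f i a ^ h i)
    (.of_forall fun a => by simp)
    (fun h h' => hf.mono fun a ha => by simp [zpow_add₀ (ha _), Finset.prod_mul_distrib])
  refine ⟨fun i => (φ (Pi.single i 1)).toMul, fun i j k z hz hlim => ?_⟩
  have := hφ (Pi.single i 1 + Pi.single j 1 - Pi.single k 1) z hz
    (hlim.congr' (hf.mono fun a ha => (prod_zpow_single_add_single_sub_single _ ha i j k).symm))
  simpa using this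

theorem Complex.tendsto_ofReal_zpow_nhdsGT_zero {m : ℤ} (hm : 0 < m) :
    Tendsto (fun ε : ℝ => (ε : ℂ) ^ m) (𝓝[>] 0) (𝓝 0) := by
  have : Tendsto (fun ε : ℝ => (ε : ℂ) ^ m) (𝓝[>] 0) (𝓝 ((0 : ℂ) ^ m)) :=
    ((continuousAt_zpow₀ (0 : ℂ) m (Or.inr hm.le)).tendsto.comp
      (continuous_ofReal.tendsto 0)).mono_left nhdsWithin_le_nhds
  rwa [zero_zpow m hm.ne'] at this

theorem diagonal_contraction_equiv_genIW_integer_complex_general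
    (n : ℕ) (c c₀ : Fin n → Fin n → Fin n → ℂ)
    (f : Fin n → ℝ → ℂ)
    (hfne : ∀ i, ∀ ε ∈ Set.Ioc (0 : ℝ) 1, f i ε ≠ 0)
    (hlim : ∀ i j k, Tendsto (fun ε : ℝ => c i j k * f i ε * f j ε / f k ε)
      (𝓝[>] (0 : ℝ)) (𝓝 (c₀ i j k))) :
    ∃ γ : Fin n → ℂ, (∀ i, γ i ≠ 0) ∧ ∃ β : Fin n → ℤ, ∀ i j k,
      Tendsto (fun ε : ℝ => c i j k * (γ i * γ j / γ k) * (ε : ℂ) ^ (β i + β j - β k))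
        (𝓝[>] (0 : ℝ)) (𝓝 (c₀ i j k)) := by
  have hf : ∀ᶠ ε in 𝓝[>] (0 : ℝ), ∀ i, f i ε ≠ 0 :=
    mem_of_superset (Ioc_mem_nhdsGT one_pos) fun ε hε i => hfne i ε hε
  have hratio : ∀ i j k, c i j k ≠ 0 →
      Tendsto (fun ε => f i ε * f j ε / f k ε) (𝓝[>] 0) (𝓝 (c₀ i j k / c i j k)) :=
    fun i j k hc => ((hlim i j k).div_const (c i j k)).congr fun ε => by field_simp
  obtain ⟨β, hβ_zero, hβ_pos⟩ := exists_int_signature_of_tendsto_mul_div f hf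
    (fun i j k => c i j k ≠ 0) (fun i j k => c₀ i j k / c i j k) hratio
  obtain ⟨γ, hγ⟩ := exists_units_mul_div_eq_lim f hf
  refine ⟨fun i => γ i, fun i => (γ i).ne_zero, β, fun i j k => ?_⟩
  by_cases hc : c i j k = 0
  · have hc₀ : c₀ i j k = 0 := tendsto_nhds_unique (hlim i j k) (by simp [hc])
    simp [hc, hc₀]
  by_cases hc₀ : c₀ i j k = 0
  · have hpow := Complex.tendsto_ofReal_zpow_nhdsGT_zero (hβ_pos i j k hc (by simp [hc₀]))
    simpa [hc₀] using hpow.const_mul (c i j k * (γ i * γ j / γ k))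
  · have hz := div_ne_zero hc₀ hc
    rw [hβ_zero i j k hc hz, hγ i j k _ hz (hratio i j k hc)]
    simp [mul_div_cancel₀ _ hc]

/-- Any diagonal contraction of a complex Lie algebra is equivalent to a generalized
Inönü–Wigner contraction with an integer signature. -/
theorem diagonal_contraction_equiv_genIW_integer_complex
    (n : ℕ) (c c₀ : Fin n → Fin n → Fin n → ℂ)
    (hanti : ∀ i j k, c i j k = -(c j i k))
    (hjac : ∀ i j k m, ∑ l, (c i j l * c l k m + c k i l * c l j m + c j k l * c l i m) = 0)
    (f : Fin n → ℝ → ℂ)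
    (hfcont : ∀ i, ContinuousOn (f i) (Set.Ioc 0 1))
    (hfne : ∀ i, ∀ ε ∈ Set.Ioc (0 : ℝ) 1, f i ε ≠ 0)
    (hlim : ∀ i j k, Tendsto (fun ε : ℝ => c i j k * f i ε * f j ε / f k ε)
      (𝓝[>] (0 : ℝ)) (𝓝 (c₀ i j k))) :
    ∃ γ : Fin n → ℂ, (∀ i, γ i ≠ 0) ∧ ∃ β : Fin n → ℤ, ∀ i j k,
      Tendsto (fun ε : ℝ => c i j k * (γ i * γ j / γ k) * (ε : ℂ) ^ (β i + β j - β k))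
        (𝓝[>] (0 : ℝ)) (𝓝 (c₀ i j k)) :=
  diagonal_contraction_equiv_genIW_integer_complex_general n c c₀ f hfne hlim
end
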